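/- arXiv:1712.00013 — 2 statements merged into one kernel-verified Lean document; each statement's English description precedes it below -/
import Mathlib

section
/- Let q be an invertible scalar and let u, v be elements of a noncommutative algebra satisfying uv = q^2 vu. Then the q-exponential Exp_{q^{-2}}(u/(q-q^{-1})) · Exp_{q^{-2}}(v/(q-q^{-1})) equals Exp_{q^{-2}}((u+v)/(q-q^{-1})), where Exp_q(x) = Σ_{k≥0} x^k/(k)_q! and (k)_q = (1-q^k)/(1-q). -/
/-! Since `v u = q⁻² u v`, the q-binomial theorem expands `(u + v)^n` as the sum over `i + j = n`
of `[i+j choose i]_{q⁻²} u^i v^j`, and the Gaussian binomial equals `(i+j)! / (i)! (j)!` for the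
q-factorial `(·)_{q⁻²}!`. Comparing coefficients of `tⁿ`, the relation reduces to the scalar
identity `c_i c_j = c_{i+j} [i+j choose i]` for `c_k = 1 / ((k)! (q - q⁻¹)^k)`, where the division
is legitimate because `q` is transcendental over `ℂ`, hence not a root of unity. -/

noncomputable section

/-- The field `ℂ(q)` of rational functions, with `q` the formal parameter. -/
abbrev Kq : Type := RatFunc ℂ

/-- The formal parameter `q`. -/
def qq : Kq := RatFunc.X

/-- The q-number `(k)_p = (1-p^k)/(1-p)`. -/
def qNum (p : Kq) (k : ℕ) : Kq := (1 - p ^ k) / (1 - p)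

/-- The q-factorial `(k)_p! = ∏_{j=1}^k (j)_p`. -/
def qFact (p : Kq) (k : ℕ) : Kq := ∏ j ∈ Finset.range k, qNum p (j + 1)

/-- Coefficient of `x^k` in `Exp_{q^{-2}}(x/(q-q⁻¹))`. -/
def qExpCoeff (k : ℕ) : Kq := (qFact ((qq ^ 2)⁻¹) k * (qq - qq⁻¹) ^ k)⁻¹

/-- The q-exponential `Exp_{q^{-2}}(x/(q-q⁻¹))` of an algebra element `x`,
as a formal power series whose degree-`k` coefficient is `x^k/((k)_{q^{-2}}! (q-q⁻¹)^k)`. -/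
def qExp {A : Type} [Ring A] [Algebra Kq A] (x : A) : PowerSeries A :=
  PowerSeries.mk fun k => qExpCoeff k • x ^ k

open Finset

section QBinomial

variable {R : Type*} [CommSemiring R]

def qBinomial (p : R) : ℕ → ℕ → R
  | _, 0 => 1
  | 0, _ + 1 => 0
  | n + 1, k + 1 => qBinomial p n k + p ^ (k + 1) * qBinomial p n (k + 1)

@[simp]
theorem qBinomial_zero_right (p : R) (n : ℕ) : qBinomial p n 0 = 1 := by
  cases n <;> rfl

theorem qBinomial_succ_succ (p : R) (n k : ℕ) :
    qBinomial p (n + 1) (k + 1) = qBinomial p n k + p ^ (k + 1) * qBinomial p n (k + 1) :=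
  rfl

theorem qBinomial_eq_zero_of_lt (p : R) : ∀ {n k : ℕ}, n < k → qBinomial p n k = 0
  | 0, _ + 1, _ => rfl
  | n + 1, k + 1, h => by
    rw [qBinomial_succ_succ, qBinomial_eq_zero_of_lt p (by omega : n < k),
      qBinomial_eq_zero_of_lt p (by omega : n < k + 1), mul_zero, add_zero]

@[simp]
theorem qBinomial_self (p : R) : ∀ n : ℕ, qBinomial p n n = 1
  | 0 => rfl
  | n + 1 => by
    rw [qBinomial_succ_succ, qBinomial_self p n, qBinomial_eq_zero_of_lt p n.lt_succ_self,
      mul_zero, add_zero]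

variable {A : Type*} [Semiring A] [Algebra R A] {p : R} {u v : A}

theorem mul_pow_of_mul_eq_smul_mul (hvu : v * u = p • (u * v)) (k : ℕ) :
    v * u ^ k = p ^ k • (u ^ k * v) := by
  induction k with
  | zero => simp
  | succ k ih =>
    rw [pow_succ, ← mul_assoc, ih, smul_mul_assoc, mul_assoc, hvu, mul_smul_comm, smul_smul,
      ← mul_assoc, ← pow_succ, ← pow_succ]

theorem add_pow_eq_sum_qBinomial (hvu : v * u = p • (u * v)) (n : ℕ) :
    (u + v) ^ n = ∑ m ∈ antidiagonal n, qBinomial p n m.1 • (u ^ m.1 * v ^ m.2) := by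
  induction n with
  | zero => simp
  | succ n ih =>
    set g : ℕ × ℕ → A := fun m => (qBinomial p n m.1 * p ^ m.1) • (u ^ m.1 * v ^ m.2)
    -- `v` moves past `u ^ i` at the cost of `p ^ i`; shifting the index turns the resulting sum
    -- into the `p ^ (i + 1)`-part of q-Pascal's rule, since `qBinomial p n (n + 1) = 0`.
    have hv : v * ∑ m ∈ antidiagonal n, qBinomial p n m.1 • (u ^ m.1 * v ^ m.2) =
        v ^ (n + 1) + ∑ m ∈ antidiagonal n, g (m.1 + 1, m.2) := by
      calc _ = ∑ m ∈ antidiagonal n, g (m.1, m.2 + 1) := by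
            rw [mul_sum]
            refine sum_congr rfl fun m _ => ?_
            rw [mul_smul_comm, ← mul_assoc, mul_pow_of_mul_eq_smul_mul hvu, smul_mul_assoc,
              smul_smul, mul_assoc, ← pow_succ']
        _ = ∑ m ∈ antidiagonal (n + 1), g m := by
            rw [Nat.sum_antidiagonal_succ']
            simp [g, qBinomial_eq_zero_of_lt p n.lt_succ_self]
        _ = v ^ (n + 1) + ∑ m ∈ antidiagonal n, g (m.1 + 1, m.2) := by
            rw [Nat.sum_antidiagonal_succ]
            simp [g]
    rw [pow_succ', ih, add_mul, hv, mul_sum, Nat.sum_antidiagonal_succ, ← add_assoc,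
      add_comm _ (v ^ (n + 1)), add_assoc, ← sum_add_distrib]
    simp only [qBinomial_zero_right, one_smul, pow_zero, one_mul, qBinomial_succ_succ, add_smul,
      g, mul_smul_comm, ← mul_assoc, ← pow_succ', mul_comm (p ^ _)]

end QBinomial

theorem qNum_add (p : Kq) (a b : ℕ) : qNum p (a + b) = qNum p a + p ^ a * qNum p b := by
  simp only [qNum]
  ring

theorem qFact_succ (p : Kq) (k : ℕ) : qFact p (k + 1) = qFact p k * qNum p (k + 1) :=
  prod_range_succ _ k

theorem qBinomial_mul_qFact_mul_qFact (p : Kq) :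
    ∀ i j : ℕ, qBinomial p (i + j) i * qFact p i * qFact p j = qFact p (i + j)
  | 0, j => by simp [qFact]
  | i + 1, 0 => by simp [qFact]
  | i + 1, j + 1 => by
    have h₁ := qBinomial_mul_qFact_mul_qFact p i (j + 1)
    have h₂ := qBinomial_mul_qFact_mul_qFact p (i + 1) j
    have hn : qNum p (i + j + 1 + 1) = qNum p (i + 1) + p ^ (i + 1) * qNum p (j + 1) := by
      rw [← qNum_add]
      ring_nf
    rw [show i + 1 + (j + 1) = i + j + 1 + 1 by omega, qBinomial_succ_succ]
    rw [show i + (j + 1) = i + j + 1 by omega] at h₁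
    rw [show i + 1 + j = i + j + 1 by omega] at h₂
    simp only [qFact_succ] at h₁ h₂ ⊢
    rw [hn]
    linear_combination qNum p (i + 1) * h₁ + p ^ (i + 1) * qNum p (j + 1) * h₂

theorem qq_pow_ne_one {n : ℕ} (hn : 0 < n) : qq ^ n ≠ 1 := fun h =>
  RatFunc.transcendental_X (K := ℂ)
    ⟨Polynomial.X ^ n - Polynomial.C 1, Polynomial.X_pow_sub_C_ne_zero hn 1,
      by simp [show (RatFunc.X : Kq) ^ n = 1 from h]⟩

theorem not_isOfFinOrder_inv_qq_sq : ¬IsOfFinOrder (qq ^ 2)⁻¹ := by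
  rw [isOfFinOrder_iff_pow_eq_one]
  rintro ⟨m, hm, h⟩
  rw [inv_pow, inv_eq_one, ← pow_mul] at h
  exact qq_pow_ne_one (by omega) h

theorem qFact_ne_zero {p : Kq} (hp : ¬IsOfFinOrder p) (k : ℕ) : qFact p k ≠ 0 := by
  have hpow : ∀ n, 0 < n → 1 - p ^ n ≠ 0 := fun n hn h =>
    hp (isOfFinOrder_iff_pow_eq_one.2 ⟨n, hn, (sub_eq_zero.1 h).symm⟩)
  refine prod_ne_zero_iff.2 fun j _ => div_ne_zero (hpow _ j.succ_pos) ?_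
  simpa using hpow 1 one_pos

theorem qq_sub_inv_ne_zero : qq - qq⁻¹ ≠ 0 := by
  rw [sub_ne_zero]
  intro h
  apply qq_pow_ne_one two_pos
  rw [sq]
  nth_rw 2 [h]
  exact mul_inv_cancel₀ RatFunc.X_ne_zero

theorem qExpCoeff_mul_qExpCoeff (i j : ℕ) :
    qExpCoeff i * qExpCoeff j = qExpCoeff (i + j) * qBinomial (qq ^ 2)⁻¹ (i + j) i := by
  have hF := qFact_ne_zero not_isOfFinOrder_inv_qq_sq
  have hb : qBinomial (qq ^ 2)⁻¹ (i + j) i ≠ 0 := by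
    have := hF (i + j)
    rw [← qBinomial_mul_qFact_mul_qFact] at this
    exact left_ne_zero_of_mul (left_ne_zero_of_mul this)
  have hd := qq_sub_inv_ne_zero
  simp only [qExpCoeff, ← qBinomial_mul_qFact_mul_qFact _ i j]
  set p : Kq := (qq ^ 2)⁻¹
  set d : Kq := qq - qq⁻¹
  field_simp
  ring

/-- If `uv = q² vu` then `Exp_{q^{-2}}(u/(q-q⁻¹)) Exp_{q^{-2}}(v/(q-q⁻¹))
= Exp_{q^{-2}}((u+v)/(q-q⁻¹))`. -/
theorem quantum_exponential_relation {A : Type} [Ring A] [Algebra Kq A]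
    (u v : A) (huv : u * v = (qq ^ 2) • (v * u)) :
    qExp u * qExp v = qExp (u + v) := by
  have hvu : v * u = (qq ^ 2)⁻¹ • (u * v) := by
    rw [huv, smul_smul, inv_mul_cancel₀ (pow_ne_zero 2 RatFunc.X_ne_zero), one_smul]
  ext n
  simp only [qExp, PowerSeries.coeff_mul, PowerSeries.coeff_mk, add_pow_eq_sum_qBinomial hvu,
    smul_sum]
  refine sum_congr rfl fun m hm => ?_
  obtain rfl := HasAntidiagonal.mem_antidiagonal.1 hm
  rw [smul_mul_smul_comm, smul_smul, qExpCoeff_mul_qExpCoeff]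

end
end

section
/- Monomial mutation invertibility: define μ'_k on a quantum torus with exchange matrix B by μ'_k(X̂_k) = X_k^{-1}, μ'_k(X̂_i) = X_i if b_{ki} ≤ 0 (i ≠ k), and μ'_k(X̂_i) = q_i^{b_{ik}b_{ki}} X_i X_k^{b_{ki}} if b_{ki} ≥ 0 (i ≠ k), where X̂_i are generators of the quantum torus for the mutated seed μ_k(B). Then μ'_k is a well-defined algebra homomorphism between the two quantum tori (it preserves the defining q-commutation relations X̂_i X̂_j = q^{-2w'_{ij}} X̂_j X̂_i ↦ relations in the original torus). -/
section QChelpers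
variable {K : Type} [Field K] {A : Type} [Ring A] [Algebra K A]

/-- q-commutation: `x * y = q ^ c • (y * x)`. -/
def QC (q : K) (c : ℤ) (x y : A) : Prop := x * y = q ^ c • (y * x)

variable {q : K}

lemma QC.of_eq {c c' : ℤ} {x y : A} (h : QC q c x y) (e : c = c') : QC q c' x y := e ▸ h

lemma QC.symm (hq : q ≠ 0) {c : ℤ} {x y : A} (h : QC q c x y) : QC q (-c) y x := by
  unfold QC at *
  rw [h, smul_smul, ← zpow_add₀ hq]
  simp

lemma QC.mul_right (hq : q ≠ 0) {c d : ℤ} {x y z : A} (h1 : QC q c x y) (h2 : QC q d x z) :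
    QC q (c + d) x (y * z) := by
  unfold QC at *
  calc x * (y * z) = (x * y) * z := (mul_assoc _ _ _).symm
    _ = q ^ c • (y * (x * z)) := by rw [h1, Algebra.smul_mul_assoc, mul_assoc]
    _ = q ^ c • (y * (q ^ d • (z * x))) := by rw [h2]
    _ = q ^ (c + d) • (y * z * x) := by
        rw [Algebra.mul_smul_comm, smul_smul, ← zpow_add₀ hq, mul_assoc]

lemma QC.mul_left (hq : q ≠ 0) {c d : ℤ} {x y z : A} (h1 : QC q c x z) (h2 : QC q d y z) :
    QC q (c + d) (x * y) z := by
  have := ((h1.symm hq).mul_right hq (h2.symm hq)).symm hq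
  exact this.of_eq (by ring)

lemma QC.one_right (q : K) (x : A) : QC q 0 x 1 := by unfold QC; simp

lemma QC.pow_right (hq : q ≠ 0) {c : ℤ} {x y : A} (h : QC q c x y) (n : ℕ) :
    QC q (c * n) x (y ^ n) := by
  induction n with
  | zero => simpa using QC.one_right q x
  | succ n ih =>
      have := ih.mul_right hq h
      rw [← pow_succ] at this
      exact this.of_eq (by push_cast; ring)

lemma QC.pow_left (hq : q ≠ 0) {c : ℤ} {x y : A} (h : QC q c x y) (n : ℕ) :
    QC q (c * n) (x ^ n) y := by
  have := ((h.symm hq).pow_right hq n).symm hq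
  exact this.of_eq (by ring)

lemma QC.smul_left {c : ℤ} {x y : A} (r : K) (h : QC q c x y) : QC q c (r • x) y := by
  unfold QC at *
  rw [Algebra.smul_mul_assoc, h, Algebra.mul_smul_comm, smul_smul, smul_smul, mul_comm]

lemma QC.smul_right {c : ℤ} {x y : A} (r : K) (h : QC q c x y) : QC q c x (r • y) := by
  unfold QC at *
  rw [Algebra.mul_smul_comm, h, Algebra.smul_mul_assoc, smul_smul, smul_smul, mul_comm]

lemma QC.inv_right (hq : q ≠ 0) {c : ℤ} {x y yi : A} (h1 : y * yi = 1) (h2 : yi * y = 1)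
    (h : QC q c x y) : QC q (-c) x yi := by
  unfold QC at *
  have key : yi * x = q ^ c • (x * yi) := by
    have : yi * (x * y) * yi = yi * (q ^ c • (y * x)) * yi := by rw [h]
    calc yi * x = yi * (x * y) * yi := by
          rw [← mul_assoc, mul_assoc (yi * x) y yi, h1, mul_one]
      _ = yi * (q ^ c • (y * x)) * yi := this
      _ = q ^ c • (x * yi) := by
          rw [Algebra.mul_smul_comm, Algebra.smul_mul_assoc, ← mul_assoc, h2, one_mul]
  rw [key, smul_smul, ← zpow_add₀ hq]
  simp

end QChelpers

/-- Matrix mutation in direction `k` (integer, skew-symmetric case; the numerator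
of the correction term is always even). -/
def mutZ {I : Type} [DecidableEq I] (k : I) (B : I → I → ℤ) : I → I → ℤ :=
  fun i j =>
    if i = k ∨ j = k then -B i j
    else B i j + (B i k * |B k j| + |B i k| * B k j) / 2

theorem monomial_mutation_is_homomorphism
    {I : Type} [DecidableEq I] {K : Type} [Field K] {A : Type} [Ring A] [Algebra K A]
    (q : K) (hq : q ≠ 0)
    (B : I → I → ℤ) (hskew : ∀ i j, B i j = -B j i)
    (k : I) (X : I → A) (Xkinv : A)
    (hk1 : X k * Xkinv = 1) (hk2 : Xkinv * X k = 1)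
    (hrel : ∀ i j, X i * X j = q ^ (-2 * B i j) • (X j * X i)) :
    let mu : I → A := fun i =>
      if i = k then Xkinv
      else if B k i ≤ 0 then X i
      else q ^ (B i k * B k i) • (X i * X k ^ (B k i).toNat)
    ∀ i j, mu i * mu j = q ^ (-2 * mutZ k B i j) • (mu j * mu i) := by
  intro mu i j
  have hBii : ∀ l, B l l = 0 := fun l => by have := hskew l l; omega
  have hQ : ∀ a b, QC q (-2 * B a b) (X a) (X b) := hrel
  have hXkXk : QC q 0 (X k) (X k) := (hQ k k).of_eq (by rw [hBii]; ring)
  have hQinvR : ∀ l, QC q (2 * B l k) (X l) Xkinv :=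
    fun l => ((hQ l k).inv_right hq hk1 hk2).of_eq (by ring)
  have hQinvL : ∀ l, QC q (2 * B k l) Xkinv (X l) :=
    fun l => ((hQinvR l).symm hq).of_eq (by rw [hskew l k]; ring)
  have hinvXk : QC q 0 Xkinv (X k) := by unfold QC; rw [hk2, hk1]; simp
  have hXkinv : QC q 0 (X k) Xkinv := by unfold QC; rw [hk1, hk2]; simp
  show QC q (-2 * mutZ k B i j) (mu i) (mu j)
  have hBik : B i k = -B k i := hskew i k
  have hBjk : B j k = -B k j := hskew j k
  by_cases hik : i = k <;> by_cases hjk : j = k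
  · have hm : mutZ k B i j = 0 := by
      simp only [mutZ]; rw [if_pos (Or.inl hik), hik, hjk, hBii k]; norm_num
    simp only [mu, if_pos hik, if_pos hjk, hm]
    unfold QC; norm_num
  · -- i = k, j ≠ k
    have hm : mutZ k B i j = -B k j := by
      simp only [mutZ]; rw [if_pos (Or.inl hik), hik]
    simp only [mu, if_pos hik, if_neg hjk, hm]
    by_cases hbj : B k j ≤ 0
    · rw [if_pos hbj]
      exact (hQinvL j).of_eq (by ring)
    · rw [if_neg hbj]
      have hn : ((B k j).toNat : ℤ) = B k j := Int.toNat_of_nonneg (by omega)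
      exact (((hQinvL j).mul_right hq ((hinvXk).pow_right hq _)).smul_right _).of_eq
        (by rw [hn]; ring)
  · -- i ≠ k, j = k
    have hm : mutZ k B i j = -B i k := by
      simp only [mutZ]; rw [if_pos (Or.inr hjk), hjk]
    simp only [mu, if_pos hjk, if_neg hik, hm]
    by_cases hbi : B k i ≤ 0
    · rw [if_pos hbi]
      exact (hQinvR i).of_eq (by ring)
    · rw [if_neg hbi]
      exact (((hQinvR i).mul_left hq ((hXkinv).pow_left hq _)).smul_left _).of_eq
        (by ring)
  · -- i ≠ k, j ≠ k
    simp only [mu, if_neg hik, if_neg hjk]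
    by_cases hbi : B k i ≤ 0 <;> by_cases hbj : B k j ≤ 0
    · rw [if_pos hbi, if_pos hbj]
      have e : B i k * |B k j| + |B i k| * B k j = 0 := by
        rw [abs_of_nonpos hbj, abs_of_nonneg (by omega : (0:ℤ) ≤ B i k), hBik]; ring
      have hm : mutZ k B i j = B i j := by
        simp only [mutZ]; rw [if_neg (by tauto), e]; norm_num
      exact (hQ i j).of_eq (by rw [hm])
    · rw [if_pos hbi, if_neg hbj]
      have e : B i k * |B k j| + |B i k| * B k j = 2 * (-(B k i * B k j)) := by
        rw [abs_of_pos (by omega), abs_of_nonneg (by omega : (0:ℤ) ≤ B i k), hBik]; ring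
      have hm : mutZ k B i j = B i j + -(B k i * B k j) := by
        simp only [mutZ]; rw [if_neg (by tauto), e, Int.mul_ediv_cancel_left _ (by norm_num)]
      have hn : ((B k j).toNat : ℤ) = B k j := Int.toNat_of_nonneg (by omega)
      exact (((hQ i j).mul_right hq ((hQ i k).pow_right hq _)).smul_right _).of_eq
        (by rw [hn, hm, hBik]; ring)
    · rw [if_neg hbi, if_pos hbj]
      have e : B i k * |B k j| + |B i k| * B k j = 2 * (B k i * B k j) := by
        rw [abs_of_nonpos hbj, abs_of_nonpos (by omega : B i k ≤ 0), hBik]; ring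
      have hm : mutZ k B i j = B i j + B k i * B k j := by
        simp only [mutZ]; rw [if_neg (by tauto), e, Int.mul_ediv_cancel_left _ (by norm_num)]
      have hn : ((B k i).toNat : ℤ) = B k i := Int.toNat_of_nonneg (by omega)
      exact (((hQ i j).mul_left hq ((hQ k j).pow_left hq _)).smul_left _).of_eq
        (by rw [hn, hm]; ring)
    · rw [if_neg hbi, if_neg hbj]
      have e : B i k * |B k j| + |B i k| * B k j = 0 := by
        rw [abs_of_pos (by omega), abs_of_nonpos (by omega : B i k ≤ 0), hBik]; ring
      have hm : mutZ k B i j = B i j := by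
        simp only [mutZ]; rw [if_neg (by tauto), e]; norm_num
      have hni : ((B k i).toNat : ℤ) = B k i := Int.toNat_of_nonneg (by omega)
      have hnj : ((B k j).toNat : ℤ) = B k j := Int.toNat_of_nonneg (by omega)
      have hA : QC q (-2 * B i j + (-2 * B i k) * (B k j).toNat)
          (X i) (X j * X k ^ (B k j).toNat) :=
        (hQ i j).mul_right hq ((hQ i k).pow_right hq _)
      have hB : QC q ((-2 * B k j + 0 * (B k j).toNat) * (B k i).toNat)
          (X k ^ (B k i).toNat) (X j * X k ^ (B k j).toNat) :=
        ((hQ k j).mul_right hq (hXkXk.pow_right hq _)).pow_left hq _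
      exact (((hA.mul_left hq hB).smul_left _).smul_right _).of_eq
        (by rw [hni, hnj, hm, hBik]; ring)
end
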